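/- arXiv:2009.02609 — 7 statements merged into one kernel-verified Lean document; each statement's English description precedes it below -/
import Mathlib

section
/- Let a = (a_1, …, a_n) be a non-decreasing sequence of real numbers, b = (b_1, …, b_n) a sequence of real numbers, and τ > 0. Suppose π is a permutation of {1, …, n} such that π(i) < π(j) whenever b_j − b_i > τ. Then for all i ∈ {1, …, n}, |a_{π(i)} − a_i| ≤ τ + 2·max_k |b_k − a_k|. -/
/-!
Put `ε = max_k |b_k - a_k|` and `j = π i`. The permutation `π` cannot map the `j + 1` indices
`k ≤ j` into the `j` positions below `j`, so some `k ≤ j` has `π i ≤ π k`; then `b_i - b_k ≤ τ`,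
and since `a_k ≤ a_j`, `a_i - a_j ≤ a_i - a_k ≤ b_i - b_k + 2ε ≤ τ + 2ε`. The other inequality
is the same argument for the reversed order.
-/

theorem Equiv.Perm.exists_le_le_apply {α : Type*} [LinearOrder α] [LocallyFiniteOrderBot α]
    (π : Equiv.Perm α) (j : α) : ∃ k ≤ j, j ≤ π k := by
  by_contra! h
  have hmaps : Set.MapsTo π (Finset.Iic j) (Finset.Iio j) := fun k hk ↦ by
    simpa using h k (by simpa using hk)
  have hcard := Finset.card_le_card_of_injOn π hmaps π.injective.injOn
  rw [Finset.Iic_eq_cons_Iio, Finset.card_cons] at hcard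
  omega

section ApproxOrder

variable {ι : Type*} [LinearOrder ι] {a b : ι → ℝ} {ε τ : ℝ}
  {π : Equiv.Perm ι}

theorem sub_apply_le_of_approx_order [LocallyFiniteOrderBot ι] (ha : Monotone a)
    (hab : ∀ k, |b k - a k| ≤ ε) (hπ : ∀ i j, b j - b i > τ → π i < π j) (i : ι) :
    a i - a (π i) ≤ τ + 2 * ε := by
  obtain ⟨k, hkj, hjk⟩ := π.exists_le_le_apply (π i)
  have hbik : b i - b k ≤ τ := not_lt.1 fun h ↦ (hπ k i h).not_ge hjk
  have hak := ha hkj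
  have hεi := abs_le.1 (hab i)
  have hεk := abs_le.1 (hab k)
  linarith

theorem apply_sub_le_of_approx_order [LocallyFiniteOrderTop ι] (ha : Monotone a)
    (hab : ∀ k, |b k - a k| ≤ ε) (hπ : ∀ i j, b j - b i > τ → π i < π j) (i : ι) :
    a (π i) - a i ≤ τ + 2 * ε := by
  have hdual := sub_apply_le_of_approx_order (ι := ιᵒᵈ) (a := fun k ↦ -a k) (b := fun k ↦ -b k)
    (π := π) (fun _ _ h ↦ neg_le_neg (ha h))
    (fun k ↦ by rw [neg_sub_neg, abs_sub_comm]; exact hab k)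
    (fun i j h ↦ hπ j i (by linarith)) i
  rwa [neg_sub_neg] at hdual

end ApproxOrder

/-- Lemma on permutations: if `a` is non-decreasing and `π` respects the order of `b`
up to tolerance `τ`, then `|a (π i) − a i| ≤ τ + 2‖b − a‖_∞`. -/
theorem perm_close_of_approx_order
    {n : ℕ} (hn : 0 < n) (a b : Fin n → ℝ) (ha : Monotone a)
    (τ : ℝ) (π : Equiv.Perm (Fin n))
    (hπ : ∀ i j : Fin n, b j - b i > τ → π i < π j) :
    ∀ i : Fin n,
      |a (π i) - a i| ≤
        τ + 2 * Finset.univ.sup'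
          (by exact ⟨⟨0, hn⟩, Finset.mem_univ _⟩)
          (fun k => |b k - a k|) := by
  intro i
  have hab : ∀ k, |b k - a k| ≤ Finset.univ.sup' ⟨⟨0, hn⟩, Finset.mem_univ _⟩
      (fun k => |b k - a k|) :=
    fun k ↦ Finset.le_sup' (fun k => |b k - a k|) (Finset.mem_univ k)
  exact abs_sub_le_iff.2
    ⟨apply_sub_le_of_approx_order ha hab hπ i, sub_apply_le_of_approx_order ha hab hπ i⟩
end

section
/- Let v ∈ ℝ^n and let v̄ be the constant vector each of whose entries equals (1/n)·Σ_{i=1}^n v_i. Then ‖v − v̄‖₂² ≤ max over permutations π of {1,…,n} of ‖v − v{π}‖₂², where v{π} = (v_{π(1)}, …, v_{π(n)}). -/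
/-- Rearrangement-type inequality: the squared distance of `v` to its coordinatewise
mean vector is at most the maximum over permutations `π` of `‖v − v∘π‖₂²`. -/
theorem dist_to_mean_le_max_perm
    {n : ℕ} (hn : 0 < n) (v : Fin n → ℝ) :
    ∑ i, (v i - (∑ j, v j) / n) ^ 2 ≤
      Finset.univ.sup' (Finset.univ_nonempty (α := Equiv.Perm (Fin n)))
        (fun π => ∑ i, (v i - v (π i)) ^ 2) := by
  classical
  set S : ℝ := ∑ j, v j with hS
  set N : ℕ := Fintype.card (Equiv.Perm (Fin n)) with hN
  have hNpos : (0 : ℝ) < N := by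
    have : 0 < N := Fintype.card_pos
    exact_mod_cast this
  -- the sum of `v (π i)` over all permutations does not depend on `i`
  have hconst : ∀ i i' : Fin n,
      ∑ π : Equiv.Perm (Fin n), v (π i) = ∑ π : Equiv.Perm (Fin n), v (π i') := by
    intro i i'
    have h := Equiv.sum_comp (Equiv.mulRight (Equiv.swap i i'))
      (fun σ : Equiv.Perm (Fin n) => v (σ i'))
    have h2 : ∀ π : Equiv.Perm (Fin n),
        v (((Equiv.mulRight (Equiv.swap i i')) π) i') = v (π i) := by
      intro π
      simp [Equiv.mulRight, Equiv.Perm.mul_apply, Equiv.swap_apply_right]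
    rw [Fintype.sum_congr _ _ h2] at h
    exact h
  -- hence each such sum equals `N * S / n`
  have hsum : ∀ i : Fin n, (n : ℝ) * (∑ π : Equiv.Perm (Fin n), v (π i)) = (N : ℝ) * S := by
    intro i
    have h1 : ∑ i' : Fin n, (∑ π : Equiv.Perm (Fin n), v (π i')) = (N : ℝ) * S := by
      rw [Finset.sum_comm]
      have h3 : ∀ π : Equiv.Perm (Fin n), ∑ i', v (π i') = S := fun π => Equiv.sum_comp π v
      calc ∑ π : Equiv.Perm (Fin n), ∑ i', v (π i')
          = ∑ _π : Equiv.Perm (Fin n), S := Finset.sum_congr rfl fun π _ => h3 π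
        _ = (N : ℝ) * S := by rw [Finset.sum_const, hN, Finset.card_univ, nsmul_eq_mul]
    have h2 : ∑ i' : Fin n, (∑ π : Equiv.Perm (Fin n), v (π i'))
        = ∑ _i' : Fin n, (∑ π : Equiv.Perm (Fin n), v (π i)) :=
      Finset.sum_congr rfl fun i' _ => hconst i' i
    rw [h2, Finset.sum_const, Finset.card_univ, Fintype.card_fin, nsmul_eq_mul] at h1
    exact h1
  -- key pointwise inequality from Cauchy–Schwarz
  have key : ∀ i : Fin n,
      (N : ℝ) * (v i - S / n) ^ 2 ≤ ∑ π : Equiv.Perm (Fin n), (v i - v (π i)) ^ 2 := by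
    intro i
    have hcs := sq_sum_le_card_mul_sum_sq (s := (Finset.univ : Finset (Equiv.Perm (Fin n))))
      (f := fun π => v i - v (π i))
    rw [Finset.card_univ, ← hN] at hcs
    have hsub : ∑ π : Equiv.Perm (Fin n), (v i - v (π i))
        = (N : ℝ) * v i - ∑ π : Equiv.Perm (Fin n), v (π i) := by
      rw [Finset.sum_sub_distrib, Finset.sum_const, Finset.card_univ, ← hN, nsmul_eq_mul]
    have hc : ∑ π : Equiv.Perm (Fin n), v (π i) = (N : ℝ) * (S / n) := by
      have hn' : (n : ℝ) ≠ 0 := by positivity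
      field_simp
      linarith [hsum i]
    rw [hsub, hc] at hcs
    have hfact : ((N : ℝ) * v i - (N : ℝ) * (S / n)) ^ 2
        = (N : ℝ) * ((N : ℝ) * (v i - S / n) ^ 2) := by ring
    rw [hfact] at hcs
    exact le_of_mul_le_mul_left hcs hNpos
  -- sum the key inequality over `i` and swap the two sums
  have hT : ∑ _π : Equiv.Perm (Fin n), (∑ i, (v i - S / n) ^ 2)
      ≤ ∑ π : Equiv.Perm (Fin n), ∑ i, (v i - v (π i)) ^ 2 := by
    rw [Finset.sum_const, Finset.card_univ, ← hN, nsmul_eq_mul, ← Finset.sum_comm]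
    calc (N : ℝ) * ∑ i, (v i - S / n) ^ 2
        = ∑ i, (N : ℝ) * (v i - S / n) ^ 2 := by rw [Finset.mul_sum]
      _ ≤ ∑ i, ∑ π : Equiv.Perm (Fin n), (v i - v (π i)) ^ 2 :=
          Finset.sum_le_sum fun i _ => key i
  obtain ⟨π, -, hπ⟩ := Finset.exists_le_of_sum_le
    (Finset.univ_nonempty (α := Equiv.Perm (Fin n))) hT
  exact le_trans hπ (Finset.le_sup' (fun π => ∑ i, (v i - v (π i)) ^ 2) (Finset.mem_univ π))
end

section
/- For n ≥ 2 and k ∈ {1, …, n} with k ≤ n − 2, the number of ordered set partitions of {1, …, n} whose largest block has size at least k is at most n^{3(n−k)}. Moreover the bound n^{3(n−k)} also holds for k = n−1 and k = n, where the counts are 2n and 1 respectively. -/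
/-!
Encode a partition by its block-assignment map `σ : [n] → [L]` and fix a block `ℓ` of size at
least `k`. The partition is determined by the graph of `σ` restricted to the at most `n - k`
points outside block `ℓ`: the values on that graph form `[L] \ {ℓ}`, which determines both `L`
and `ℓ`, and all remaining points lie in block `ℓ`. Such a graph is a subset of
`[n] × {0, …, n}` with at most `n - k` elements, and there are at most
`(n (n + 1) + 1) ^ (n - k) ≤ n ^ (3 (n - k))` of those.
-/

open Finset Function

section OffGraph

variable {α β : Type*}

theorem eq_and_eq_of_Iio_diff_singleton_eq [LinearOrder β] {a b c d : β} (hc : c < a) (hd : d < b)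
    (h : Set.Iio a \ {c} = Set.Iio b \ {d}) : a = b ∧ c = d := by
  -- If `a < b`, then `a ∈ Iio b \ {d}` forces `a = d`, so `c ∈ Iio b \ {d} = Iio a \ {c}`.
  have hle : ∀ {a b c d : β}, c < a → Set.Iio a \ {c} = Set.Iio b \ {d} → b ≤ a := by
    intro a b c d hc h
    have ha := Set.ext_iff.1 h a
    have hc' := Set.ext_iff.1 h c
    simp only [Set.mem_sdiff, Set.mem_Iio, Set.mem_singleton_iff] at ha hc'
    grind
  have hab : a = b := le_antisymm (hle hd h.symm) (hle hc h)
  subst hab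
  have hd' := Set.ext_iff.1 h d
  simp only [Set.mem_sdiff, Set.mem_Iio, Set.mem_singleton_iff] at hd'
  grind

variable [Fintype α] [DecidableEq α] [DecidableEq β]

def offGraph (f : α → β) (c : β) : Finset (α × β) :=
  ({i | f i ≠ c} : Finset α).image fun i => (i, f i)

theorem mem_offGraph {f : α → β} {c : β} {i : α} {b : β} :
    (i, b) ∈ offGraph f c ↔ f i = b ∧ b ≠ c := by
  simp only [offGraph, mem_image, mem_filter, mem_univ, true_and, Prod.mk.injEq]
  grind

theorem card_offGraph (f : α → β) (c : β) : #(offGraph f c) = #{i | f i ≠ c} :=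
  card_image_of_injective _ fun _ _ h => (Prod.mk.inj h).1

theorem eq_of_offGraph_eq [LinearOrder β] {f g : α → β} {a b c d : β}
    (hf : Set.range f = Set.Iio a) (hg : Set.range g = Set.Iio b)
    (hc : c < a) (hd : d < b) (h : offGraph f c = offGraph g d) : f = g := by
  have hcd : c = d := by
    refine (eq_and_eq_of_Iio_diff_singleton_eq hc hd ?_).2
    ext x
    have := fun i => congrArg ((i, x) ∈ ·) h
    simp only [mem_offGraph, eq_iff_iff] at this
    simp only [← hf, ← hg, Set.mem_sdiff, Set.mem_range, Set.mem_singleton_iff]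
    grind
  subst hcd
  funext i
  have hf' := congrArg ((i, f i) ∈ ·) h
  have hg' := congrArg ((i, g i) ∈ ·) h
  simp only [mem_offGraph, eq_iff_iff] at hf' hg'
  grind

end OffGraph

theorem card_finsets_card_le_le {α : Type*} [Fintype α] [DecidableEq α] (m : ℕ) :
    #{s : Finset α | #s ≤ m} ≤ (Fintype.card α + 1) ^ m := by
  set N := Fintype.card α
  have hsplit : ({s : Finset α | #s ≤ m} : Finset _) =
      (range (m + 1)).biUnion fun j => powersetCard j univ := by
    ext s
    simp
  calc #{s : Finset α | #s ≤ m}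
      ≤ ∑ j ∈ range (m + 1), N.choose j := by
        rw [hsplit]
        exact card_biUnion_le.trans_eq (by simp [N])
    _ ≤ ∑ j ∈ range (m + 1), N ^ j * 1 ^ (m - j) * m.choose j := by
        gcongr with j hj
        rw [one_pow, mul_one]
        exact le_mul_of_le_of_one_le (Nat.choose_le_pow N j)
          (Nat.choose_pos (Nat.lt_succ_iff.1 (mem_range.1 hj)))
    _ = (N + 1) ^ m := (add_pow _ _ _).symm

section BlockMap

variable {n : ℕ}

def blockMap (p : Σ L : Fin (n + 1), Fin n → Fin L.1) : Fin n → Fin (n + 1) :=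
  fun i => Fin.castLE p.1.2.le (p.2 i)

theorem range_blockMap {p : Σ L : Fin (n + 1), Fin n → Fin L.1} (hp : Surjective p.2) :
    Set.range (blockMap p) = Set.Iio p.1 := by
  ext x
  simp only [blockMap, Set.mem_range, Set.mem_Iio]
  constructor
  · rintro ⟨i, rfl⟩
    exact (p.2 i).2
  · intro hx
    obtain ⟨i, hi⟩ := hp ⟨x, hx⟩
    exact ⟨i, by ext; simp [hi]⟩

theorem blockMap_injOn :
    Set.InjOn blockMap {p : Σ L : Fin (n + 1), Fin n → Fin L.1 | Surjective p.2} := by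
  rintro ⟨L, σ⟩ hσ ⟨L', σ'⟩ hσ' h
  obtain rfl : L = L' := Set.Iio_injective <| by
    rw [← range_blockMap hσ, ← range_blockMap hσ', h]
  obtain rfl : σ = σ' := funext fun i => Fin.castLE_injective _ (congrFun h i)
  rfl

theorem card_offGraph_blockMap_le {k : ℕ} (p : Σ L : Fin (n + 1), Fin n → Fin L.1)
    (ℓ : Fin p.1.1) (hℓ : k ≤ #{i | p.2 i = ℓ}) :
    #(offGraph (blockMap p) (Fin.castLE p.1.2.le ℓ)) ≤ n - k := by
  have hsplit := card_filter_add_card_filter_not (s := univ) (fun i => p.2 i = ℓ)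
  simp only [card_univ, Fintype.card_fin] at hsplit
  simp only [card_offGraph, blockMap, ne_eq, Fin.castLE_inj]
  omega

end BlockMap

theorem card_ordered_partitions_large_block_le_general
    (n k : ℕ) (hn : 2 ≤ n) :
    Nat.card {p : Σ L : Fin (n + 1), Fin n → Fin L.1 //
        Function.Surjective p.2 ∧
        ∃ ℓ : Fin p.1.1, k ≤ (Finset.univ.filter (fun i => p.2 i = ℓ)).card} ≤
      n ^ (3 * (n - k)) := by
  classical
  calc _ ≤ Nat.card {G : Finset (Fin n × Fin (n + 1)) // #G ≤ n - k} :=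
        Nat.card_le_card_of_injective
          (fun q => ⟨offGraph (blockMap q.1) (Fin.castLE q.1.1.2.le q.2.2.choose),
            card_offGraph_blockMap_le _ _ q.2.2.choose_spec⟩)
          fun q q' h => Subtype.ext <| blockMap_injOn q.2.1 q'.2.1 <|
            eq_of_offGraph_eq (range_blockMap q.2.1) (range_blockMap q'.2.1)
              q.2.2.choose.2 q'.2.2.choose.2 (congrArg Subtype.val h)
    _ ≤ (n * (n + 1) + 1) ^ (n - k) := by
        simpa [Nat.card_eq_fintype_card, Fintype.card_subtype] using
          card_finsets_card_le_le (α := Fin n × Fin (n + 1)) (n - k)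
    _ ≤ n ^ (3 * (n - k)) := by
        rw [pow_mul]
        exact Nat.pow_le_pow_left (by nlinarith [Nat.mul_le_mul hn hn]) _

/-- An ordered set partition of `[n]` into `L` nonempty blocks is identified with a
surjection `σ : [n] → [L]` (the block-assignment map); its blocks are the fibers of `σ`.
The number of ordered set partitions of `[n]` whose largest block has size at least `k`
is at most `n^{3(n−k)}`, for every `n ≥ 2` and `1 ≤ k ≤ n`. -/
theorem card_ordered_partitions_large_block_le
    (n k : ℕ) (hn : 2 ≤ n) (hk : 1 ≤ k) (hkn : k ≤ n) :
    Nat.card {p : Σ L : Fin (n + 1), Fin n → Fin L.1 //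
        Function.Surjective p.2 ∧
        ∃ ℓ : Fin p.1.1, k ≤ (Finset.univ.filter (fun i => p.2 i = ℓ)).card} ≤
      n ^ (3 * (n - k)) :=
  card_ordered_partitions_large_block_le_general n k hn
end

section
/- Let ε ∈ ℝ^I be a standard Gaussian vector over a finite index set I and B_1,…,B_s a partition of I. Then the random variable sup{⟨ε, θ⟩ : θ ∈ Θ, ‖θ‖₂ ≤ t}, where Θ consists of vectors constant on each block, is stochastically dominated by t·Y_s where Y_s² follows a chi-squared distribution with s degrees of freedom. -/
/-!
On block-constant vectors `θ` the inner product only sees the normalized block sums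
`Zₗ(x) = (∑_{i ∈ Bₗ} xᵢ) / √|Bₗ|`: one has `⟪x, θ⟫ = ⟪Z(x), Z(θ)⟫` and `‖Z(θ)‖ = ‖θ‖`, so by
Cauchy–Schwarz the supremum is at most `t ‖Z(ε)‖`. Each `Zₗ` is the inner product with a unit
vector supported on `Bₗ` (or with `0` when `Bₗ = ∅`), and these vectors are pairwise orthogonal.
The law of a family of inner products with a standard Gaussian vector depends only on the Gram
matrix of the family, so `Z(ε)` has the law of the vector of coordinates of `η` on the nonempty
blocks, whose norm is at most `‖η‖`.
-/

open MeasureTheory ProbabilityTheory Function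
open scoped RealInnerProductSpace

section InnerFamily

variable {E F κ : Type*} [NormedAddCommGroup E] [InnerProductSpace ℝ E]
  [NormedAddCommGroup F] [InnerProductSpace ℝ F]

def innerFamily (v : κ → E) (x : E) : EuclideanSpace ℝ κ :=
  WithLp.toLp 2 fun k => ⟪v k, x⟫

theorem continuous_innerFamily (v : κ → E) : Continuous (innerFamily v) :=
  (PiLp.continuous_toLp 2 _).comp (continuous_pi fun _ => continuous_const.inner continuous_id)

variable [Fintype κ]

theorem inner_innerFamily (v : κ → E) (x : E) (t : EuclideanSpace ℝ κ) :
    ⟪innerFamily v x, t⟫ = ⟪x, ∑ k, t k • v k⟫ := by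
  simp only [innerFamily, PiLp.inner_apply, inner_sum, real_inner_smul_right,
    RCLike.inner_apply, conj_trivial, real_inner_comm x]

theorem norm_sum_smul_eq_of_inner_eq {v : κ → E} {w : κ → F}
    (h : ∀ k l, ⟪v k, v l⟫ = ⟪w k, w l⟫) (t : κ → ℝ) :
    ‖∑ k, t k • v k‖ = ‖∑ k, t k • w k‖ := by
  rw [← sq_eq_sq₀ (norm_nonneg _) (norm_nonneg _), ← real_inner_self_eq_norm_sq,
    ← real_inner_self_eq_norm_sq]
  simp_rw [sum_inner, inner_sum, real_inner_smul_left, real_inner_smul_right, h]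

variable [FiniteDimensional ℝ E] [MeasurableSpace E] [BorelSpace E]
  [FiniteDimensional ℝ F] [MeasurableSpace F] [BorelSpace F]

theorem charFun_map_innerFamily_stdGaussian (v : κ → E) (t : EuclideanSpace ℝ κ) :
    charFun ((stdGaussian E).map (innerFamily v)) t =
      Complex.exp (-‖∑ k, t k • v k‖ ^ 2 / 2) := by
  rw [charFun_apply, integral_map (continuous_innerFamily v).aemeasurable (by fun_prop)]
  simp_rw [inner_innerFamily]
  exact charFun_stdGaussian _

theorem map_innerFamily_stdGaussian_eq {v : κ → E} {w : κ → F}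
    (h : ∀ k l, ⟪v k, v l⟫ = ⟪w k, w l⟫) :
    (stdGaussian E).map (innerFamily v) = (stdGaussian F).map (innerFamily w) := by
  refine Measure.ext_of_charFun (funext fun t => ?_)
  rw [charFun_map_innerFamily_stdGaussian, charFun_map_innerFamily_stdGaussian,
    norm_sum_smul_eq_of_inner_eq h]

end InnerFamily

section StdGaussian

variable {Ω ι : Type*} [MeasurableSpace Ω] {X : Ω → EuclideanSpace ℝ ι}

theorem measurable_of_measurable_apply (hmeas : ∀ i, Measurable fun ω => X ω i) :
    Measurable X :=
  (WithLp.measurable_toLp 2 _).comp (measurable_pi_lambda _ hmeas)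

theorem map_eq_stdGaussian_of_iIndepFun [Fintype ι] {μ : Measure Ω} [IsProbabilityMeasure μ]
    (hmeas : ∀ i, Measurable fun ω => X ω i) (hindep : iIndepFun (fun i ω => X ω i) μ)
    (hgauss : ∀ i, μ.map (fun ω => X ω i) = gaussianReal 0 1) :
    μ.map X = stdGaussian (EuclideanSpace ℝ ι) := by
  have hpi : μ.map (fun ω i => X ω i) = Measure.pi fun _ => gaussianReal 0 1 := by
    rw [(iIndepFun_iff_map_fun_eq_pi_map fun i => (hmeas i).aemeasurable).1 hindep]
    simp_rw [hgauss]
  rw [← map_pi_eq_stdGaussian, ← hpi,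
    Measure.map_map (WithLp.measurable_toLp 2 _) (measurable_pi_lambda _ hmeas)]
  rfl

end StdGaussian

section Blocks

variable {I κ : Type*} [Fintype I] [DecidableEq I]

noncomputable def blockVector (B : κ → Finset I) (ℓ : κ) : EuclideanSpace ℝ I :=
  WithLp.toLp 2 fun i => if i ∈ B ℓ then (√(B ℓ).card)⁻¹ else 0

theorem inner_blockVector (B : κ → Finset I) (ℓ : κ) (x : EuclideanSpace ℝ I) :
    ⟪blockVector B ℓ, x⟫ = (∑ i ∈ B ℓ, x i) / √(B ℓ).card := by
  simp [blockVector, PiLp.inner_apply, div_eq_mul_inv, Finset.sum_mul, mul_comm]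

theorem inner_blockVector_blockVector [DecidableEq κ] {B : κ → Finset I}
    (hdisj : Pairwise (Disjoint on B)) (k l : κ) :
    ⟪blockVector B k, blockVector B l⟫ = if k = l ∧ (B k).Nonempty then 1 else 0 := by
  rw [inner_blockVector]
  by_cases hkl : k = l
  · subst hkl
    rcases (B k).eq_empty_or_nonempty with hempty | hne
    · simp [hempty]
    · have hpos : (0 : ℝ) < (B k).card := by exact_mod_cast hne.card_pos
      simp only [blockVector, PiLp.toLp_apply, Finset.sum_ite_mem, Finset.inter_self,
        Finset.sum_const, nsmul_eq_mul, hne, and_self, ↓reduceIte]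
      field_simp
      rw [Real.sq_sqrt hpos.le]
  · have hzero : ∀ i ∈ B k, blockVector B l i = 0 := fun i hi => by
      simp [blockVector, Finset.disjoint_left.1 (hdisj hkl) hi]
    simp [Finset.sum_eq_zero hzero, hkl]

theorem sum_mul_eq_inner_blockVector_mul_inner_blockVector (B : κ → Finset I) (ℓ : κ)
    {θ : EuclideanSpace ℝ I} (hθ : ∀ i ∈ B ℓ, ∀ j ∈ B ℓ, θ i = θ j) (x : EuclideanSpace ℝ I) :
    ∑ i ∈ B ℓ, θ i * x i = ⟪blockVector B ℓ, θ⟫ * ⟪blockVector B ℓ, x⟫ := by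
  rw [inner_blockVector, inner_blockVector]
  rcases (B ℓ).eq_empty_or_nonempty with hempty | ⟨i₀, hi₀⟩
  · simp [hempty]
  have hpos : (0 : ℝ) < (B ℓ).card := by exact_mod_cast Finset.card_pos.2 ⟨i₀, hi₀⟩
  have hconst : ∀ i ∈ B ℓ, θ i = θ i₀ := fun i hi => hθ i hi i₀ hi₀
  have hsum : ∑ i ∈ B ℓ, θ i * x i = θ i₀ * ∑ i ∈ B ℓ, x i := by
    rw [Finset.mul_sum]
    exact Finset.sum_congr rfl fun i hi => by rw [hconst i hi]
  rw [hsum, Finset.sum_congr rfl hconst, Finset.sum_const, nsmul_eq_mul]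
  field_simp
  rw [Real.sq_sqrt hpos.le]

variable [Fintype κ] {B : κ → Finset I}

theorem sum_eq_sum_blocks (hdisj : Pairwise (Disjoint on B)) (hcover : ∀ i, ∃ ℓ, i ∈ B ℓ)
    (f : I → ℝ) : ∑ i, f i = ∑ ℓ, ∑ i ∈ B ℓ, f i := by
  rw [← Finset.sum_biUnion fun k _ l _ hkl => hdisj hkl]
  exact Finset.sum_congr (by ext i; simpa using hcover i) fun _ _ => rfl

theorem inner_eq_inner_innerFamily_blockVector (hdisj : Pairwise (Disjoint on B))
    (hcover : ∀ i, ∃ ℓ, i ∈ B ℓ) {θ : EuclideanSpace ℝ I}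
    (hθ : ∀ ℓ, ∀ i ∈ B ℓ, ∀ j ∈ B ℓ, θ i = θ j) (x : EuclideanSpace ℝ I) :
    ⟪x, θ⟫ = ⟪innerFamily (blockVector B) x, innerFamily (blockVector B) θ⟫ := by
  simp only [PiLp.inner_apply, RCLike.inner_apply, conj_trivial, innerFamily]
  rw [sum_eq_sum_blocks hdisj hcover]
  exact Finset.sum_congr rfl fun ℓ _ =>
    sum_mul_eq_inner_blockVector_mul_inner_blockVector B ℓ (hθ ℓ) x

theorem norm_innerFamily_blockVector (hdisj : Pairwise (Disjoint on B))
    (hcover : ∀ i, ∃ ℓ, i ∈ B ℓ) {θ : EuclideanSpace ℝ I}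
    (hθ : ∀ ℓ, ∀ i ∈ B ℓ, ∀ j ∈ B ℓ, θ i = θ j) :
    ‖innerFamily (blockVector B) θ‖ = ‖θ‖ := by
  rw [← sq_eq_sq₀ (norm_nonneg _) (norm_nonneg _), ← real_inner_self_eq_norm_sq,
    ← real_inner_self_eq_norm_sq, ← inner_eq_inner_innerFamily_blockVector hdisj hcover hθ]

theorem iSup_inner_le_mul_norm_innerFamily_blockVector (hdisj : Pairwise (Disjoint on B))
    (hcover : ∀ i, ∃ ℓ, i ∈ B ℓ) {Θ : Set (EuclideanSpace ℝ I)}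
    (hΘ : ∀ θ ∈ Θ, ∀ ℓ, ∀ i ∈ B ℓ, ∀ j ∈ B ℓ, θ i = θ j) {t : ℝ} (ht : 0 ≤ t)
    (x : EuclideanSpace ℝ I) :
    ⨆ θ ∈ {θ ∈ Θ | ‖θ‖ ≤ t}, ⟪x, θ⟫ ≤ t * ‖innerFamily (blockVector B) x‖ := by
  have hbound : 0 ≤ t * ‖innerFamily (blockVector B) x‖ := by positivity
  refine Real.iSup_le (fun θ => Real.iSup_le (fun ⟨hθ, hnorm⟩ => ?_) hbound) hbound
  calc ⟪x, θ⟫ = ⟪innerFamily (blockVector B) x, innerFamily (blockVector B) θ⟫ :=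
        inner_eq_inner_innerFamily_blockVector hdisj hcover (hΘ θ hθ) x
    _ ≤ ‖innerFamily (blockVector B) x‖ * ‖θ‖ := by
        rw [← norm_innerFamily_blockVector hdisj hcover (hΘ θ hθ)]
        exact real_inner_le_norm _ _
    _ ≤ t * ‖innerFamily (blockVector B) x‖ := by
        rw [mul_comm]; exact mul_le_mul_of_nonneg_right hnorm (norm_nonneg _)

end Blocks

section Coordinates

variable {κ : Type*} [Fintype κ] [DecidableEq κ] (p : κ → Prop) [DecidablePred p]

theorem inner_single_ite_single_ite (k l : κ) :
    ⟪EuclideanSpace.single k (if p k then (1 : ℝ) else 0),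
      EuclideanSpace.single l (if p l then (1 : ℝ) else 0)⟫ = if k = l ∧ p k then 1 else 0 := by
  by_cases hkl : k = l
  · subst hkl
    by_cases hk : p k <;> simp [hk]
  · simp [EuclideanSpace.inner_single_left, hkl]

theorem norm_innerFamily_single_ite_le (y : EuclideanSpace ℝ κ) :
    ‖innerFamily (fun k => EuclideanSpace.single k (if p k then (1 : ℝ) else 0)) y‖ ≤ ‖y‖ := by
  simp only [EuclideanSpace.norm_eq]
  refine Real.sqrt_le_sqrt (Finset.sum_le_sum fun k _ => ?_)
  by_cases hk : p k <;> simp [innerFamily, EuclideanSpace.inner_single_left, hk, sq_nonneg]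

end Coordinates

/-- Stochastic dominance of the Gaussian supremum over block-constant vectors:
`sup{⟨ε, θ⟩ : θ ∈ Θ, ‖θ‖₂ ≤ t}` is stochastically dominated by `t·Y_s`, where
`Y_s = ‖η‖` for a standard Gaussian vector `η` in `ℝ^s` (so that `Y_s² ∼ χ²_s`). -/
theorem gaussian_sup_block_constant_dominated
    {I : Type*} [Fintype I] {s : ℕ} (B : Fin s → Finset I)
    (hdisj : ∀ ℓ ℓ' : Fin s, ℓ ≠ ℓ' → Disjoint (B ℓ) (B ℓ'))
    (hcover : ∀ i : I, ∃ ℓ, i ∈ B ℓ)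
    (Θ : Set (EuclideanSpace ℝ I))
    (hconst : ∀ θ ∈ Θ, ∀ ℓ : Fin s, ∀ i ∈ B ℓ, ∀ j ∈ B ℓ, θ i = θ j)
    {Ω : Type*} [MeasurableSpace Ω] (μ : Measure Ω) [IsProbabilityMeasure μ]
    (ε : Ω → EuclideanSpace ℝ I)
    (hmeas : ∀ i, Measurable fun ω => ε ω i)
    (hindep : iIndepFun
      (fun i ω => ε ω i) μ)
    (hgauss : ∀ i, μ.map (fun ω => ε ω i) = gaussianReal 0 1)
    {Ω' : Type*} [MeasurableSpace Ω'] (ν : Measure Ω') [IsProbabilityMeasure ν]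
    (η : Ω' → EuclideanSpace ℝ (Fin s))
    (hmeas' : ∀ j, Measurable fun ω' => η ω' j)
    (hindep' : iIndepFun
      (fun j ω' => η ω' j) ν)
    (hgauss' : ∀ j, ν.map (fun ω' => η ω' j) = gaussianReal 0 1)
    (t : ℝ) (ht : 0 ≤ t) :
    ∀ u : ℝ,
      μ {ω | u ≤ ⨆ θ ∈ {θ ∈ Θ | ‖θ‖ ≤ t}, ⟪ε ω, θ⟫} ≤
        ν {ω' | u ≤ t * ‖η ω'‖} := by
  classical
  intro u
  set v := blockVector B
  set w := fun ℓ => EuclideanSpace.single ℓ (if (B ℓ).Nonempty then (1 : ℝ) else 0)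
  have hlaw : (μ.map ε).map (innerFamily v) = (ν.map η).map (innerFamily w) := by
    rw [map_eq_stdGaussian_of_iIndepFun hmeas hindep hgauss,
      map_eq_stdGaussian_of_iIndepFun hmeas' hindep' hgauss']
    refine map_innerFamily_stdGaussian_eq fun k l => ?_
    rw [inner_blockVector_blockVector hdisj]
    exact (inner_single_ite_single_ite (fun ℓ => (B ℓ).Nonempty) k l).symm
  set S := {z : EuclideanSpace ℝ (Fin s) | u ≤ t * ‖z‖}
  have hS : MeasurableSet S := measurableSet_le measurable_const (by fun_prop)
  calc μ {ω | u ≤ ⨆ θ ∈ {θ ∈ Θ | ‖θ‖ ≤ t}, ⟪ε ω, θ⟫}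
      ≤ μ (ε ⁻¹' (innerFamily v ⁻¹' S)) := measure_mono fun ω hω =>
        hω.trans (iSup_inner_le_mul_norm_innerFamily_blockVector hdisj hcover hconst ht (ε ω))
    _ = ν (η ⁻¹' (innerFamily w ⁻¹' S)) := by
        have hv := (continuous_innerFamily v).measurable
        have hw := (continuous_innerFamily w).measurable
        rw [← Measure.map_apply (measurable_of_measurable_apply hmeas) (hS.preimage hv),
          ← Measure.map_apply (measurable_of_measurable_apply hmeas') (hS.preimage hw),
          ← Measure.map_apply hv hS, ← Measure.map_apply hw hS, hlaw]
    _ ≤ ν {ω' | u ≤ t * ‖η ω'‖} := measure_mono fun ω' hω' =>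
        hω'.trans (mul_le_mul_of_nonneg_left (norm_innerFamily_single_ite_le _ (η ω')) ht)
end

section
/- Let C be a closed subset of ℝ^N, ε ∈ ℝ^N an arbitrary vector, θ* ∈ C, and θ̂ a minimizer over C of ‖θ* + ε − θ‖₂². Define f(t) = sup{⟨ε, θ − θ*⟩ : θ ∈ C, ‖θ − θ*‖₂ ≤ t} − t²/2. If there exists t* > 0 such that f(t) < 0 for all t ≥ t*, then ‖θ̂ − θ*‖₂ ≤ t*. -/
/-! Comparing `θ̂` with the feasible point `θ*` in the least squares criterion gives the basic
inequality `‖θ̂ - θ*‖² / 2 ≤ ⟪ε, θ̂ - θ*⟫`. Hence `f(‖θ̂ - θ*‖) ≥ 0`, which is impossible for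
`‖θ̂ - θ*‖ > t*`. -/

open scoped RealInnerProductSpace

section InnerProductSpace

variable {E : Type*} [NormedAddCommGroup E] [InnerProductSpace ℝ E]

theorem norm_sq_div_two_le_inner_of_norm_sub_le {ε x : E} (h : ‖ε - x‖ ≤ ‖ε‖) :
    ‖x‖ ^ 2 / 2 ≤ ⟪ε, x⟫ := by
  have hsq : ‖ε - x‖ ^ 2 ≤ ‖ε‖ ^ 2 := pow_le_pow_left₀ (norm_nonneg _) h 2
  rw [norm_sub_sq_real] at hsq
  linarith

theorem inner_le_biSup_of_mem_of_norm_sub_le (C : Set E) (ε θ₀ : E) {θ : E} {t : ℝ}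
    (hθ : θ ∈ C) (ht : ‖θ - θ₀‖ ≤ t) :
    ⟪ε, θ - θ₀⟫ ≤ ⨆ θ ∈ {θ ∈ C | ‖θ - θ₀‖ ≤ t}, ⟪ε, θ - θ₀⟫ := by
  have hbdd : BddAbove (⋃ θ, Set.range fun (_ : θ ∈ {θ ∈ C | ‖θ - θ₀‖ ≤ t}) ↦ ⟪ε, θ - θ₀⟫) := by
    refine ⟨‖ε‖ * t, ?_⟩
    rintro _ ⟨_, ⟨θ', rfl⟩, ⟨hθ', rfl⟩⟩
    calc ⟪ε, θ' - θ₀⟫ ≤ ‖ε‖ * ‖θ' - θ₀‖ := real_inner_le_norm _ _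
      _ ≤ ‖ε‖ * t := mul_le_mul_of_nonneg_left hθ'.2 (norm_nonneg _)
  exact le_ciSup₂ (f := fun θ (_ : θ ∈ {θ ∈ C | ‖θ - θ₀‖ ≤ t}) ↦ ⟪ε, θ - θ₀⟫) hbdd θ ⟨hθ, ht⟩

end InnerProductSpace

theorem variational_bound_least_squares_general
    {N : ℕ} (C : Set (EuclideanSpace ℝ (Fin N)))
    (ε θstar : EuclideanSpace ℝ (Fin N)) (hθstar : θstar ∈ C)
    (θhat : EuclideanSpace ℝ (Fin N)) (hθhat : θhat ∈ C)
    (hmin : ∀ θ ∈ C, ‖θstar + ε - θhat‖ ≤ ‖θstar + ε - θ‖)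
    (tstar : ℝ)
    (hf : ∀ t : ℝ, tstar ≤ t →
      (⨆ θ ∈ {θ ∈ C | ‖θ - θstar‖ ≤ t}, ⟪ε, θ - θstar⟫) - t ^ 2 / 2 < 0) :
    ‖θhat - θstar‖ ≤ tstar := by
  by_contra! h
  have hbasic : ‖θhat - θstar‖ ^ 2 / 2 ≤ ⟪ε, θhat - θstar⟫ := by
    apply norm_sq_div_two_le_inner_of_norm_sub_le
    simpa [sub_sub_eq_add_sub, add_comm ε] using hmin θstar hθstar
  have hsup := inner_le_biSup_of_mem_of_norm_sub_le C ε θstar hθhat le_rfl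
  linarith [hf _ h.le]

/-- Chatterjee's variational formula for least squares over a closed set: if
`f(t) = sup{⟨ε, θ − θ*⟩ : θ ∈ C, ‖θ − θ*‖ ≤ t} − t²/2` is negative for all `t ≥ t*`
with `t* > 0`, then the least squares estimator satisfies `‖θ̂ − θ*‖ ≤ t*`. -/
theorem variational_bound_least_squares
    {N : ℕ} (C : Set (EuclideanSpace ℝ (Fin N))) (hC : IsClosed C)
    (ε θstar : EuclideanSpace ℝ (Fin N)) (hθstar : θstar ∈ C)
    (θhat : EuclideanSpace ℝ (Fin N)) (hθhat : θhat ∈ C)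
    (hmin : ∀ θ ∈ C, ‖θstar + ε - θhat‖ ≤ ‖θstar + ε - θ‖)
    (tstar : ℝ) (htstar : 0 < tstar)
    (hf : ∀ t : ℝ, tstar ≤ t →
      (⨆ θ ∈ {θ ∈ C | ‖θ - θstar‖ ≤ t}, ⟪ε, θ - θstar⟫) - t ^ 2 / 2 < 0) :
    ‖θhat - θstar‖ ≤ tstar :=
  variational_bound_least_squares_general C ε θstar hθstar θhat hθhat hmin tstar hf
end

section
/- Fix a finite lattice L = [n_1] × … × [n_d] and the coordinatewise partial order on it. For each x ∈ L, let 𝓛(x) and 𝓤(x) be the collections of lower and upper sets containing x. For a function a: L → ℝ, define P(a)(x) = min over L' ∈ 𝓛(x) of max over U ∈ 𝓤(x) of the average of a over L' ∩ U (the isotonic projection). Then for all a, b: L → ℝ, ‖P(a) − P(b)‖_∞ ≤ ‖a − b‖_∞; i.e., the isotonic (least squares) projection onto coordinatewise monotone functions on the lattice is an ℓ∞-contraction. -/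
open scoped Classical

noncomputable section

variable {d : ℕ} {n : Fin d → ℕ}

/-- The finite collection of lower sets of the lattice `[n₁] × ⋯ × [n_d]` containing `x`. -/
def lowerAt (x : ∀ j, Fin (n j)) : Finset (Finset (∀ j, Fin (n j))) :=
  Finset.univ.filter fun S => IsLowerSet (S : Set (∀ j, Fin (n j))) ∧ x ∈ S

/-- The finite collection of upper sets of the lattice containing `x`. -/
def upperAt (x : ∀ j, Fin (n j)) : Finset (Finset (∀ j, Fin (n j))) :=
  Finset.univ.filter fun S => IsUpperSet (S : Set (∀ j, Fin (n j))) ∧ x ∈ S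

lemma lowerAt_nonempty (x : ∀ j, Fin (n j)) : (lowerAt x).Nonempty :=
  ⟨Finset.univ, by simp [lowerAt, Finset.coe_univ, isLowerSet_univ]⟩

lemma upperAt_nonempty (x : ∀ j, Fin (n j)) : (upperAt x).Nonempty :=
  ⟨Finset.univ, by simp [upperAt, Finset.coe_univ, isUpperSet_univ]⟩

/-- The min–max formula for the isotonic (least squares) projection of `a` onto
coordinatewise monotone functions on the lattice:
`P(a)(x) = min_{L ∋ x lower} max_{U ∋ x upper} mean_{L ∩ U}(a)`. -/
def isoProj (a : (∀ j, Fin (n j)) → ℝ) : (∀ j, Fin (n j)) → ℝ := fun x =>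
  (lowerAt x).inf' (lowerAt_nonempty x) fun L' =>
    (upperAt x).sup' (upperAt_nonempty x) fun U =>
      (∑ y ∈ L' ∩ U, a y) / ((L' ∩ U).card : ℝ)

lemma mean_le_mean_add (a b : (∀ j, Fin (n j)) → ℝ) (S : Finset (∀ j, Fin (n j)))
    (hS : S.Nonempty) :
    (∑ y ∈ S, a y) / (S.card : ℝ) ≤ (∑ y ∈ S, b y) / (S.card : ℝ) + ‖a - b‖ := by
  have hc : (0:ℝ) < (S.card : ℝ) := by exact_mod_cast Finset.card_pos.2 hS
  rw [div_add' _ _ _ hc.ne', div_le_div_iff_of_pos_right hc]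
  calc ∑ y ∈ S, a y ≤ ∑ y ∈ S, (b y + ‖a - b‖) := by
        refine Finset.sum_le_sum fun y _ => ?_
        have := norm_le_pi_norm (a - b) y
        simp only [Pi.sub_apply, Real.norm_eq_abs] at this
        linarith [abs_le.1 this]
    _ = ∑ y ∈ S, b y + ‖a - b‖ * S.card := by
        rw [Finset.sum_add_distrib, Finset.sum_const, nsmul_eq_mul, mul_comm]

lemma isoProj_le (a b : (∀ j, Fin (n j)) → ℝ) (x : ∀ j, Fin (n j)) :
    isoProj a x ≤ isoProj b x + ‖a - b‖ := by
  unfold isoProj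
  obtain ⟨L', hL', hLeq⟩ := Finset.exists_mem_eq_inf' (lowerAt_nonempty x)
    (fun L' => (upperAt x).sup' (upperAt_nonempty x) fun U =>
      (∑ y ∈ L' ∩ U, b y) / ((L' ∩ U).card : ℝ))
  rw [hLeq]
  refine le_trans (Finset.inf'_le _ hL') ?_
  obtain ⟨U, hU, hUeq⟩ := Finset.exists_mem_eq_sup' (upperAt_nonempty x)
    (fun U => (∑ y ∈ L' ∩ U, a y) / ((L' ∩ U).card : ℝ))
  rw [hUeq]
  have hne : (L' ∩ U).Nonempty := by
    refine ⟨x, Finset.mem_inter.2 ⟨?_, ?_⟩⟩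
    · exact (Finset.mem_filter.1 hL').2.2
    · exact (Finset.mem_filter.1 hU).2.2
  refine le_trans (mean_le_mean_add a b _ hne) ?_
  have : (∑ y ∈ L' ∩ U, b y) / ((L' ∩ U).card : ℝ) ≤
      (upperAt x).sup' (upperAt_nonempty x) fun U =>
        (∑ y ∈ L' ∩ U, b y) / ((L' ∩ U).card : ℝ) :=
    Finset.le_sup' (fun U => (∑ y ∈ L' ∩ U, b y) / ((L' ∩ U).card : ℝ)) hU
  linarith

/-- The isotonic projection on the lattice `[n₁] × ⋯ × [n_d]` is an `ℓ∞`-contraction: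
`‖P(a) − P(b)‖_∞ ≤ ‖a − b‖_∞`. -/
theorem isoProj_linfty_contraction (a b : (∀ j, Fin (n j)) → ℝ) :
    ‖isoProj a - isoProj b‖ ≤ ‖a - b‖ := by
  have h : ∀ x, |isoProj a x - isoProj b x| ≤ ‖a - b‖ := fun x => by
    rw [abs_sub_le_iff]
    constructor
    · linarith [isoProj_le a b x]
    · have := isoProj_le b a x
      rw [show b - a = -(a-b) by ring, norm_neg] at this
      linarith
  refine (pi_norm_le_iff_of_nonneg (norm_nonneg _)).2 fun x => ?_
  simpa [Real.norm_eq_abs] using h x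

end
end

section
/- Let a₁ ≤ a₂ ≤ … ≤ a_n and b₁, …, b_n be real numbers, and let π be a permutation of [n] sorting b in non-decreasing order (b_{π(1)} ≤ … ≤ b_{π(n)}). Then Σ_{i=1}^n |a_{π(i)} − a_i| ≤ 2·Σ_{i=1}^n |b_i − a_i|. -/
/-!
The sorted matching is optimal for the ℓ¹ cost: if `a` and `c` are both monotone then
`∑ |c i - a i| ≤ ∑ |c (σ i) - a i|` for every permutation `σ`, because `(x, y) ↦ -|y - x|` is
supermodular and repeatedly uncrossing the largest moved point only increases the sum of a
supermodular function. Applied to `c = b ∘ π` this gives `∑ |b (π i) - a i| ≤ ∑ |b i - a i|`,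
and the triangle inequality through `b (π i)` finishes.
-/

open Finset Equiv Equiv.Perm

section Supermodular

variable {ι α β M : Type*} [LinearOrder ι] [Fintype ι] [Preorder α] [Preorder β]
  [AddCommMonoid M] [PartialOrder M] [IsOrderedAddMonoid M] {F : α → β → M}
  {a : ι → α} {c : ι → β}

theorem sum_le_sum_swap_mul_of_supermodular
    (hF : ∀ ⦃x₁ x₂ y₁ y₂⦄, x₂ ≤ x₁ → y₂ ≤ y₁ → F x₁ y₂ + F x₂ y₁ ≤ F x₁ y₁ + F x₂ y₂)
    {σ : Perm ι} {i : ι} (hσi : σ i ≠ i) (ha : a (σ.symm i) ≤ a i) (hc : c (σ i) ≤ c i) :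
    ∑ k, F (a k) (c (σ k)) ≤ ∑ k, F (a k) (c ((swap i (σ i) * σ) k)) := by
  set j := σ.symm i
  have hσj : σ j = i := σ.apply_symm_apply i
  have hji : j ≠ i := fun h ↦ hσi (by rwa [h] at hσj)
  have hsplit : ∀ h : ι → M, ∑ k, h k = h i + h j + ∑ k ∈ (univ.erase i).erase j, h k := by
    intro h
    rw [add_assoc, add_sum_erase _ _ (mem_erase.2 ⟨hji, mem_univ j⟩), add_sum_erase _ _ (mem_univ i)]
  rw [hsplit, hsplit]
  have hrest : ∀ k ∈ (univ.erase i).erase j,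
      F (a k) (c (σ k)) = F (a k) (c ((swap i (σ i) * σ) k)) := by
    intro k hk
    obtain ⟨hkj, hki, -⟩ : k ≠ j ∧ k ≠ i ∧ _ := by simpa only [mem_erase] using hk
    rw [mul_apply,
      swap_apply_of_ne_of_ne (ne_of_ne_of_eq (σ.injective.ne hkj) hσj) (σ.injective.ne hki)]
  rw [sum_congr rfl hrest, mul_apply, mul_apply, swap_apply_right, hσj, swap_apply_left]
  exact add_le_add_left (hF ha hc) _

theorem sum_comp_perm_le_sum_of_supermodular
    (hF : ∀ ⦃x₁ x₂ y₁ y₂⦄, x₂ ≤ x₁ → y₂ ≤ y₁ → F x₁ y₂ + F x₂ y₁ ≤ F x₁ y₁ + F x₂ y₂)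
    (ha : Monotone a) (hc : Monotone c) (σ : Perm ι) :
    ∑ k, F (a k) (c (σ k)) ≤ ∑ k, F (a k) (c k) := by
  induction hn : σ.support.card using Nat.strong_induction_on generalizing σ with
  | _ n ih =>
  obtain rfl | hσ := eq_or_ne σ 1
  · rfl
  set i := σ.support.max' (nonempty_iff_ne_empty.2 (support_eq_empty_iff.not.2 hσ))
  have hi : i ∈ σ.support := max'_mem _ _
  have hσi : σ i ≠ i := mem_support.1 hi
  -- `σ i` and `σ.symm i` are moved points as well, hence lie below the largest one `i`.
  have hσ_symm : σ.symm i ∈ σ.support := by rwa [← apply_mem_support, apply_symm_apply]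
  calc ∑ k, F (a k) (c (σ k))
      ≤ ∑ k, F (a k) (c ((swap i (σ i) * σ) k)) :=
        sum_le_sum_swap_mul_of_supermodular hF hσi (ha (le_max' _ _ hσ_symm))
          (hc (le_max' _ _ (apply_mem_support.2 hi)))
    _ ≤ ∑ k, F (a k) (c k) := ih _ (hn ▸ card_support_swap_mul hσi) _ rfl

end Supermodular

theorem abs_sub_add_abs_sub_le_abs_sub_add_abs_sub {x₁ x₂ y₁ y₂ : ℝ} (hx : x₂ ≤ x₁) (hy : y₂ ≤ y₁) :
    |y₁ - x₁| + |y₂ - x₂| ≤ |y₂ - x₁| + |y₁ - x₂| := by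
  cases abs_cases (y₁ - x₁) <;> cases abs_cases (y₂ - x₂) <;> cases abs_cases (y₂ - x₁) <;>
    cases abs_cases (y₁ - x₂) <;> linarith

theorem Monotone.sum_abs_sub_le_sum_abs_comp_perm_sub {ι : Type*} [LinearOrder ι] [Fintype ι]
    {a c : ι → ℝ} (ha : Monotone a) (hc : Monotone c) (σ : Perm ι) :
    ∑ i, |c i - a i| ≤ ∑ i, |c (σ i) - a i| := by
  have := sum_comp_perm_le_sum_of_supermodular (F := fun x y ↦ -|y - x|)
    (fun _ _ _ _ hx hy ↦ by linarith [abs_sub_add_abs_sub_le_abs_sub_add_abs_sub hx hy]) ha hc σ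
  simpa only [sum_neg_distrib, neg_le_neg_iff] using this

/-- ℓ1 rearrangement-type bound: if `a` is non-decreasing and `π` sorts `b` in
non-decreasing order, then `Σᵢ |a_{π(i)} − a_i| ≤ 2·Σᵢ |b_i − a_i|`. -/
theorem sorted_perm_l1_bound
    {n : ℕ} (a b : Fin n → ℝ) (ha : Monotone a)
    (π : Equiv.Perm (Fin n)) (hπ : Monotone fun i => b (π i)) :
    ∑ i, |a (π i) - a i| ≤ 2 * ∑ i, |b i - a i| := by
  have hmatch : ∑ i, |b (π i) - a i| ≤ ∑ i, |b i - a i| := by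
    simpa only [apply_symm_apply] using ha.sum_abs_sub_le_sum_abs_comp_perm_sub hπ π.symm
  have hreindex : ∑ i, |b (π i) - a (π i)| = ∑ i, |b i - a i| :=
    Equiv.sum_comp π fun i ↦ |b i - a i|
  calc ∑ i, |a (π i) - a i|
      ≤ ∑ i, (|b (π i) - a (π i)| + |b (π i) - a i|) := by
        gcongr with i
        rw [abs_sub_comm (b (π i))]
        exact abs_sub_le _ _ _
    _ ≤ 2 * ∑ i, |b i - a i| := by
        rw [sum_add_distrib, hreindex]
        linarith
end
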